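/- arXiv:2209.07433 — 4 statements merged into one kernel-verified Lean document; each statement's English description precedes it below -/
import Mathlib

section
/- The operator M = A(x)T⁺ + B(x)T⁻ + C(x)I, where A(x) = (N-x)(x-β+1), B(x) = x(α+β+N+1-x), C(x) = -(A(x)+B(x)), acts on the basis φ_n(x) = (-x)_n as M φ_n(x) = -n(n+α+1) φ_n(x) + n(n-β)(n-N-1) φ_{n-1}(x), for 0 ≤ n ≤ N, with φ_{-1} = 0. -/
noncomputable def poch (a : ℝ) (n : ℕ) : ℝ := ∏ i ∈ Finset.range n, (a + i)

/-- The Pochhammer basis φ_n(x) = (-x)_n. -/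
noncomputable def phi (n : ℕ) (x : ℝ) : ℝ := poch (-x) n

/-!
Since `C = -(A + B)`, `M = A (T⁺ - I) + B (T⁻ - I)`. On `φ_n = (-x)_n` the recursions
`(a)_{n+1} = a (a + 1)_n = (a)_n (a + n)` give `(T⁺ - I) φ_{n+1} = -(n + 1) φ_n` and
`x T⁻ φ_n = (x - n) φ_n`; after expanding `φ_{n+1} = (n - x) φ_n` what is left is a polynomial
identity in `x`.
-/

lemma poch_succ (a : ℝ) (n : ℕ) : poch a (n + 1) = poch a n * (a + n) :=
  Finset.prod_range_succ _ n

lemma poch_succ' (a : ℝ) (n : ℕ) : poch a (n + 1) = a * poch (a + 1) n := by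
  rw [poch, Finset.prod_range_succ', mul_comm, poch]
  simp only [Nat.cast_zero, add_zero, Nat.cast_succ, add_assoc, add_comm (1 : ℝ)]

lemma phi_succ (n : ℕ) (x : ℝ) : phi (n + 1) x = phi n x * (n - x) := by
  rw [phi, poch_succ, phi, neg_add_eq_sub]

lemma phi_succ_add_one (n : ℕ) (x : ℝ) : phi (n + 1) (x + 1) = -(x + 1) * phi n x := by
  rw [phi, poch_succ', phi, show -(x + 1) + 1 = -x by ring]

lemma mul_phi_sub_one (n : ℕ) (x : ℝ) : x * phi n (x - 1) = (x - n) * phi n x := by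
  have h := phi_succ_add_one n (x - 1)
  rw [sub_add_cancel, phi_succ] at h
  linear_combination h

theorem stmt5_general (N : ℕ) (α β : ℝ) (n : ℕ) (x : ℝ) :
    ((N : ℝ) - x) * (x - β + 1) * phi n (x + 1)
      + x * (α + β + N + 1 - x) * phi n (x - 1)
      + (-(((N : ℝ) - x) * (x - β + 1) + x * (α + β + N + 1 - x))) * phi n x
      = -(n : ℝ) * ((n : ℝ) + α + 1) * phi n x
        + (n : ℝ) * ((n : ℝ) - β) * ((n : ℝ) - N - 1) * phi (n - 1) x := by
  cases n with
  | zero => simp [phi, poch]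
  | succ m =>
    have hdiag := mul_phi_sub_one (m + 1) x
    rw [phi_succ m x] at hdiag
    rw [Nat.add_sub_cancel, phi_succ_add_one, phi_succ m x]
    push_cast at hdiag ⊢
    linear_combination (α + β + N + 1 - x) * hdiag

theorem stmt5 (N : ℕ) (α β : ℝ) (n : ℕ) (hn : n ≤ N) (x : ℝ) :
    ((N : ℝ) - x) * (x - β + 1) * phi n (x + 1)
      + x * (α + β + N + 1 - x) * phi n (x - 1)
      + (-(((N : ℝ) - x) * (x - β + 1) + x * (α + β + N + 1 - x))) * phi n x
      = -(n : ℝ) * ((n : ℝ) + α + 1) * phi n x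
        + (n : ℝ) * ((n : ℝ) - β) * ((n : ℝ) - N - 1) * phi (n - 1) x :=
  stmt5_general N α β n x
end

section
/- Define P_n(x) = ∑_{k=0}^{n} [(-n)_k (α+1)_k / (k! (-N)_k (1-β-n)_k)] (-x)_k. Then P_n solves the generalized eigenvalue problem M P_n(x) = n L P_n(x), where L = (N-x)T⁺ + (x-N-α-1)I and M = A(x)T⁺ + B(x)T⁻ + C(x)I with A(x) = (N-x)(x-β+1), B(x) = x(α+β+N+1-x), C(x) = -(A(x)+B(x)). -/
/-- The R_I polynomial of Hahn type P_n(x; α, β, N). -/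
noncomputable def P (α β : ℝ) (N n : ℕ) (x : ℝ) : ℝ :=
  ∑ k ∈ Finset.range (n + 1),
    poch (-(n : ℝ)) k * poch (α + 1) k /
      ((Nat.factorial k : ℝ) * poch (-(N : ℝ)) k * poch (1 - β - n) k) * poch (-x) k

/-!
Expand `P_n` in the basis `q_k(x) = (-x)_k`. On this basis the pencil `M - n L` is a
lowering operator with only two terms,
`(M - n L) q_k = (n - k)(k + α + 1) q_k - k (N - k + 1)(k - β - n) q_{k-1}`
(the `q_{k+1}` contributions of `M` and `n L` cancel), so `(M - n L) P_n` telescopes to `0`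
because the coefficients of `P_n` satisfy the two-term recurrence
`(n - k)(k + α + 1) c_k = (k + 1)(N - k)(k + 1 - β - n) c_{k+1}`.
-/

namespace HahnRI

open Finset

theorem poch_zero (a : ℝ) : poch a 0 = 1 := prod_range_zero _

theorem poch_succ (a : ℝ) (k : ℕ) : poch a (k + 1) = poch a k * (a + k) :=
  prod_range_succ _ _

theorem poch_succ' (a : ℝ) (k : ℕ) : poch a (k + 1) = a * poch (a + 1) k := by
  rw [poch, prod_range_succ', Nat.cast_zero, add_zero, mul_comm]
  exact congrArg (a * ·) (prod_congr rfl fun i _ => by push_cast; ring)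

/-- `M = A T⁺ + B T⁻ + C I`. -/
def hahnM (α β : ℝ) (N : ℕ) (f : ℝ → ℝ) (x : ℝ) : ℝ :=
  ((N : ℝ) - x) * (x - β + 1) * f (x + 1)
    + x * (α + β + N + 1 - x) * f (x - 1)
    + (-(((N : ℝ) - x) * (x - β + 1) + x * (α + β + N + 1 - x))) * f x

/-- `L = (N - x) T⁺ + (x - N - α - 1) I`. -/
def hahnL (α : ℝ) (N : ℕ) (f : ℝ → ℝ) (x : ℝ) : ℝ :=
  ((N : ℝ) - x) * f (x + 1) + (x - N - α - 1) * f x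

theorem hahnM_sub_hahnL_sum {ι : Type*} (α β μ : ℝ) (N : ℕ) (s : Finset ι) (c : ι → ℝ)
    (g : ι → ℝ → ℝ) (x : ℝ) :
    hahnM α β N (fun y => ∑ i ∈ s, c i * g i y) x - μ * hahnL α N (fun y => ∑ i ∈ s, c i * g i y) x
      = ∑ i ∈ s, c i * (hahnM α β N (g i) x - μ * hahnL α N (g i) x) := by
  simp only [hahnM, hahnL, mul_sum, ← sum_add_distrib, ← sum_sub_distrib]
  exact sum_congr rfl fun i _ => by ring

theorem hahnM_sub_hahnL_poch (α β : ℝ) (N n k : ℕ) (x : ℝ) :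
    hahnM α β N (fun y => poch (-y) k) x - n * hahnL α N (fun y => poch (-y) k) x
      = (n - k) * (k + α + 1) * poch (-x) k
        - k * (N - k + 1) * (k - β - n) * poch (-x) (k - 1) := by
  cases k with
  | zero => simp only [hahnM, hahnL, poch_zero]; push_cast; ring
  | succ k =>
    have up : poch (-(x + 1)) (k + 1) = poch (-x) (k + 1) - (k + 1) * poch (-x) k := by
      rw [poch_succ', poch_succ, show -(x + 1) + 1 = -x by ring]; ring
    have down : x * poch (-(x - 1)) (k + 1) = (x - k - 1) * poch (-x) (k + 1) := by
      have h := poch_succ' (-x) (k + 1)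
      rw [poch_succ, show -x + 1 = -(x - 1) by ring] at h
      push_cast at h
      linear_combination h
    have step := poch_succ (-x) k
    simp only [hahnM, hahnL, Nat.add_sub_cancel]
    push_cast
    linear_combination (((N : ℝ) - x) * (x - β + 1) - n * (N - x)) * up
      + (α + β + N + 1 - x) * down + (k + 1) * (x - N - β + k + 1 - n) * step

theorem sum_range_succ_sub_eq_zero {M : Type*} [AddCommGroup M] {f g : ℕ → M} {n : ℕ}
    (hg : g 0 = 0) (hf : f n = 0) (h : ∀ k < n, f k = g (k + 1)) :
    ∑ k ∈ range (n + 1), (f k - g k) = 0 := by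
  rw [sum_sub_distrib, sum_range_succ, sum_range_succ', hf, hg,
    sum_congr rfl fun k hk => h k (mem_range.1 hk), add_zero, sub_self]

/-- The coefficient `c_k` of `(-x)_k` in `P_n`. -/
noncomputable def hahnCoeff (α β : ℝ) (N n k : ℕ) : ℝ :=
  poch (-(n : ℝ)) k * poch (α + 1) k /
    ((Nat.factorial k : ℝ) * poch (-(N : ℝ)) k * poch (1 - β - n) k)

theorem hahnCoeff_succ {α β : ℝ} {N n : ℕ} (hβ : ∀ k ≤ n, poch (1 - β - n) k ≠ 0)
    (hN : ∀ k ≤ n, poch (-(N : ℝ)) k ≠ 0) {k : ℕ} (hk : k < n) :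
    (n - k) * (k + α + 1) * hahnCoeff α β N n k
      = (k + 1) * (N - k) * (k + 1 - β - n) * hahnCoeff α β N n (k + 1) := by
  have hβ' := hβ (k + 1) hk
  have hN' := hN (k + 1) hk
  rw [poch_succ] at hβ' hN'
  have hβk : 1 - β - n + k ≠ 0 := right_ne_zero_of_mul hβ'
  have hNk : -(N : ℝ) + k ≠ 0 := right_ne_zero_of_mul hN'
  have hβk₀ := hβ k hk.le
  have hNk₀ := hN k hk.le
  have hfact : (k.factorial : ℝ) ≠ 0 := by positivity
  have hk₁ : (k : ℝ) + 1 ≠ 0 := by positivity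
  rw [hahnCoeff, hahnCoeff, poch_succ (-(n : ℝ)), poch_succ (α + 1), poch_succ (-(N : ℝ)),
    poch_succ (1 - β - n), Nat.factorial_succ]
  push_cast
  field_simp
  ring

end HahnRI

open HahnRI Finset in
theorem stmt7_general (N n : ℕ) (α β : ℝ)
    (hβ : ∀ k ≤ n, poch (1 - β - n) k ≠ 0)
    (hN : ∀ k ≤ n, poch (-(N : ℝ)) k ≠ 0) :
    ∀ x : ℝ,
      ((N : ℝ) - x) * (x - β + 1) * P α β N n (x + 1)
        + x * (α + β + N + 1 - x) * P α β N n (x - 1)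
        + (-(((N : ℝ) - x) * (x - β + 1) + x * (α + β + N + 1 - x))) * P α β N n x
      = (n : ℝ) * (((N : ℝ) - x) * P α β N n (x + 1) + (x - N - α - 1) * P α β N n x) := by
  intro x
  have hP : P α β N n = fun y => ∑ k ∈ range (n + 1), hahnCoeff α β N n k * poch (-y) k := rfl
  rw [← sub_eq_zero]
  change hahnM α β N (P α β N n) x - n * hahnL α N (P α β N n) x = 0
  rw [hP, hahnM_sub_hahnL_sum]
  simp only [hahnM_sub_hahnL_poch, mul_sub]
  refine sum_range_succ_sub_eq_zero (by simp) (by simp) fun k hk => ?_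
  rw [Nat.add_sub_cancel]
  push_cast
  linear_combination poch (-x) k * hahnCoeff_succ hβ hN hk

theorem stmt7 (N n : ℕ) (α β : ℝ) (hn : n ≤ N)
    (hβ : ∀ k ≤ n, poch (1 - β - n) k ≠ 0)
    (hN : ∀ k ≤ n, poch (-(N : ℝ)) k ≠ 0) :
    ∀ x : ℝ,
      ((N : ℝ) - x) * (x - β + 1) * P α β N n (x + 1)
        + x * (α + β + N + 1 - x) * P α β N n (x - 1)
        + (-(((N : ℝ) - x) * (x - β + 1) + x * (α + β + N + 1 - x))) * P α β N n x
      = (n : ℝ) * (((N : ℝ) - x) * P α β N n (x + 1) + (x - N - α - 1) * P α β N n x) :=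
  stmt7_general N n α β hβ hN
end

section
/- The operator Z* acting on rational functions and defined by its bidiagonal action Z* ρ_n(x) = n ρ_n(x) - [n(1+N-n)/(1+α+N-n)] ρ_{n-1}(x) on the basis ρ_n(x) = (-x)_n/(1+β-x)_n satisfies M* = Z* L*, where L* ρ_n = (α+N-n) ρ_{n+1} - (1+α+N-n) ρ_n and M* ρ_n = (α+N-n)(1+n) ρ_{n+1} + [n(2n-α) - N(2n+1)] ρ_n + n(1+N-n) ρ_{n-1}. -/
/-- The rational basis ρ_n(x) = (-x)_n / (1+β-x)_n. -/
noncomputable def rho (β : ℝ) (n : ℕ) (x : ℝ) : ℝ := poch (-x) n / poch (1 + β - x) n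

theorem stmt10_general (N : ℕ) (α β : ℝ) (n : ℕ)
    (h1 : (α + (N : ℝ) - n) ≠ 0) (h2 : (1 + α + (N : ℝ) - n) ≠ 0) :
    ∀ x : ℝ,
      (α + (N : ℝ) - n) * (1 + n) * rho β (n + 1) x
        + ((n : ℝ) * (2 * n - α) - (N : ℝ) * (2 * n + 1)) * rho β n x
        + (n : ℝ) * (1 + (N : ℝ) - n) * rho β (n - 1) x
      = (α + (N : ℝ) - n) *
          (((n : ℝ) + 1) * rho β (n + 1) x
            - (((n : ℝ) + 1) * (1 + (N : ℝ) - ((n : ℝ) + 1)) / (1 + α + (N : ℝ) - ((n : ℝ) + 1)))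
                * rho β n x)
        - (1 + α + (N : ℝ) - n) *
            ((n : ℝ) * rho β n x
              - ((n : ℝ) * (1 + (N : ℝ) - n) / (1 + α + (N : ℝ) - n)) * rho β (n - 1) x) := by
  intro x
  -- The Z*-denominator attached to ρ_n at index n + 1 is exactly the L*-coefficient α + N - n,
  -- so both fractions cancel and the identity is a coefficient comparison in ρ_{n+1}, ρ_n, ρ_{n-1}.
  have shift : 1 + α + (N : ℝ) - ((n : ℝ) + 1) = α + N - n := by ring
  rw [shift]
  field_simp
  ring

/-- M* = Z* L*, verified on each basis element ρ_n: applying the bidiagonal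
action of Z* to L* ρ_n = (α+N-n) ρ_{n+1} - (1+α+N-n) ρ_n reproduces M* ρ_n. -/
theorem stmt10 (N : ℕ) (α β : ℝ) (n : ℕ) (hn : n ≤ N)
    (h1 : (α + (N : ℝ) - n) ≠ 0) (h2 : (1 + α + (N : ℝ) - n) ≠ 0) :
    ∀ x : ℝ,
      (α + (N : ℝ) - n) * (1 + n) * rho β (n + 1) x
        + ((n : ℝ) * (2 * n - α) - (N : ℝ) * (2 * n + 1)) * rho β n x
        + (n : ℝ) * (1 + (N : ℝ) - n) * rho β (n - 1) x
      = (α + (N : ℝ) - n) *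
          (((n : ℝ) + 1) * rho β (n + 1) x
            - (((n : ℝ) + 1) * (1 + (N : ℝ) - ((n : ℝ) + 1)) / (1 + α + (N : ℝ) - ((n : ℝ) + 1)))
                * rho β n x)
        - (1 + α + (N : ℝ) - n) *
            ((n : ℝ) * rho β n x
              - ((n : ℝ) * (1 + (N : ℝ) - n) / (1 + α + (N : ℝ) - n)) * rho β (n - 1) x) :=
  stmt10_general N α β n h1 h2
end

section
/- The contiguity relation [(α+1)(1-β)/(1-β-n)] P_n(x; α+1, β-1, N) = (n+α+1) P_n(x; α, β, N) + [n(α+β+n)/(1-β-n)] P_{n-1}(x; α, β, N) holds as an identity of polynomials in x. -/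
/-! The contiguity relation holds coefficientwise in the basis `poch (-x) k / (k! * poch (-N) k)`
of the polynomials in `x`, where it reduces to the three relations
`poch a k * (a + k) = a * poch (a + 1) k` for `a = -n`, `α + 1` and `1 - β - n`. Only the top coefficient of `P_{n-1}` is missing, and it
would vanish anyway since `poch (-(n - 1)) n = 0`. -/

open Finset

lemma poch_succ_left (a : ℝ) (k : ℕ) : poch a (k + 1) = a * poch (a + 1) k := by
  unfold poch
  rw [prod_range_succ', mul_comm]
  congr 1
  · simp
  · exact prod_congr rfl fun i _ => by push_cast; ring

lemma poch_mul_add (a : ℝ) (k : ℕ) : poch a k * (a + k) = a * poch (a + 1) k := by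
  rw [← poch_succ_left]
  exact (prod_range_succ _ _).symm

lemma poch_neg_natCast_eq_zero {m k : ℕ} (h : m < k) : poch (-(m : ℝ)) k = 0 :=
  prod_eq_zero (mem_range.mpr h) (by simp)

lemma poch_ne_zero_of_poch_add_one_ne_zero {a : ℝ} {k : ℕ} (ha : a ≠ 0)
    (h : poch (a + 1) k ≠ 0) : poch a k ≠ 0 := by
  intro h0
  have := poch_mul_add a k
  rw [h0, zero_mul] at this
  exact mul_ne_zero ha h this.symm

/-- The coefficient of `poch (-x) k / (k! * poch (-N) k)` in `P α β N n x`, with `n = ν` real. -/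
noncomputable def hahnCoeff (α β ν : ℝ) (k : ℕ) : ℝ :=
  poch (-ν) k * poch (α + 1) k / poch (1 - β - ν) k

lemma P_eq_sum_hahnCoeff (α β : ℝ) (N n : ℕ) (x : ℝ) :
    P α β N n x = ∑ k ∈ range (n + 1),
      hahnCoeff α β n k * (poch (-x) k / ((Nat.factorial k : ℝ) * poch (-(N : ℝ)) k)) :=
  sum_congr rfl fun k _ => by unfold hahnCoeff; ring

lemma hahnCoeff_natCast_eq_zero (α β : ℝ) {m k : ℕ} (h : m < k) : hahnCoeff α β m k = 0 := by
  rw [hahnCoeff, poch_neg_natCast_eq_zero h, zero_mul, zero_div]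

lemma hahnCoeff_contiguity (α β ν : ℝ) (k : ℕ) (hc : 1 - β - ν ≠ 0)
    (hk : poch (1 - (β - 1) - ν) k ≠ 0) :
    (α + 1) * (1 - β) / (1 - β - ν) * hahnCoeff (α + 1) (β - 1) ν k
      = (ν + α + 1) * hahnCoeff α β ν k
        + ν * (α + β + ν) / (1 - β - ν) * hahnCoeff α β (ν - 1) k := by
  rw [show 1 - (β - 1) - ν = 1 - β - ν + 1 by ring] at hk
  have hk₀ : poch (1 - β - ν) k ≠ 0 := poch_ne_zero_of_poch_add_one_ne_zero hc hk
  have eν := poch_mul_add (-ν) k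
  have eα := poch_mul_add (α + 1) k
  have eβ := poch_mul_add (1 - β - ν) k
  unfold hahnCoeff
  rw [show 1 - (β - 1) - ν = 1 - β - ν + 1 by ring, show -(ν - 1) = -ν + 1 by ring,
    show 1 - β - (ν - 1) = 1 - β - ν + 1 by ring]
  field_simp
  linear_combination (-(1 - β) * poch (-ν) k * poch (1 - β - ν) k) * eα
    + ((ν + α + 1) * poch (-ν) k * poch (α + 1) k) * eβ
    - ((α + β + ν) * poch (α + 1) k * poch (1 - β - ν) k) * eν

theorem stmt12_general (N n : ℕ) (α β : ℝ)
    (h1 : (1 - β - (n : ℝ)) ≠ 0)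
    (h3 : ∀ k ≤ n, poch (1 - (β - 1) - (n : ℝ)) k ≠ 0) :
    ∀ x : ℝ,
      (α + 1) * (1 - β) / (1 - β - (n : ℝ)) * P (α + 1) (β - 1) N n x
        = ((n : ℝ) + α + 1) * P α β N n x
          + (n : ℝ) * (α + β + n) / (1 - β - (n : ℝ)) * P α β N (n - 1) x := by
  intro x
  rcases Nat.eq_zero_or_pos n with rfl | hn1
  · simp only [P, zero_add, range_one, sum_singleton, poch, range_zero, prod_empty] at h1 ⊢
    field_simp
    ring
  have hprev : P α β N (n - 1) x = ∑ k ∈ range (n + 1),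
      hahnCoeff α β ((n : ℝ) - 1) k
        * (poch (-x) k / ((Nat.factorial k : ℝ) * poch (-(N : ℝ)) k)) := by
    rw [P_eq_sum_hahnCoeff, ← Nat.cast_pred hn1, Nat.sub_add_cancel hn1, sum_range_succ,
      hahnCoeff_natCast_eq_zero α β (Nat.sub_lt hn1 one_pos), zero_mul, add_zero]
  rw [hprev, P_eq_sum_hahnCoeff, P_eq_sum_hahnCoeff, mul_sum, mul_sum, mul_sum,
    ← sum_add_distrib]
  refine sum_congr rfl fun k hk => ?_
  linear_combination (poch (-x) k / ((Nat.factorial k : ℝ) * poch (-(N : ℝ)) k))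
    * hahnCoeff_contiguity α β n k h1 (h3 k (Nat.lt_succ_iff.mp (mem_range.mp hk)))

theorem stmt12 (N n : ℕ) (α β : ℝ) (hn1 : 1 ≤ n) (hn2 : n ≤ N)
    (h1 : (1 - β - (n : ℝ)) ≠ 0)
    (h2 : ∀ k ≤ n, poch (1 - β - (n : ℝ)) k ≠ 0)
    (h3 : ∀ k ≤ n, poch (1 - (β - 1) - (n : ℝ)) k ≠ 0)
    (h4 : ∀ k ≤ n, poch (1 - β - ((n : ℝ) - 1)) k ≠ 0)
    (h5 : ∀ k ≤ n, poch (-(N : ℝ)) k ≠ 0) :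
    ∀ x : ℝ,
      (α + 1) * (1 - β) / (1 - β - (n : ℝ)) * P (α + 1) (β - 1) N n x
        = ((n : ℝ) + α + 1) * P α β N n x
          + (n : ℝ) * (α + β + n) / (1 - β - (n : ℝ)) * P α β N (n - 1) x :=
  stmt12_general N n α β h1 h3
end
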